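/- For every integer k ≥ 1, the end vertex of the path transmits with probability at least 1/2: the number of permutations σ of {1,…,k} with 1 ∈ S(σ) is at least k!/2. -/

import Mathlib

/-!
A vertex whose priority beats those of all its neighbours is inserted when it is processed,
since no neighbour is in the greedy set yet. For the end vertex `0` of the path the only
neighbour is `1`, and the permutations with `σ 0 < σ 1` are exactly half of all permutations:
right multiplication by the transposition `(0 1)` exchanges them with those with `σ 1 < σ 0`.
-/

/-- The greedy independent set on the path `P_k` (vertex `i : Fin k` stands for vertex
`i+1` of `{1,…,k}`, and `i`, `i+1` are adjacent): vertices are processed in increasing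
order of their priority rank (`σ i` is the rank of vertex `i`, smaller = higher
priority), and a vertex is inserted iff none of its neighbours is already in the set. -/
def pathGreedy (k : ℕ) (σ : Equiv.Perm (Fin k)) : Finset (Fin k) :=
  (List.finRange k).foldl
    (fun D r =>
      if ∀ j ∈ D, ¬ ((σ.symm r : ℕ) + 1 = (j : ℕ) ∨ (j : ℕ) + 1 = (σ.symm r : ℕ))
      then insert (σ.symm r) D else D)
    ∅

open Finset

section Greedy

variable {α : Type*} [DecidableEq α] (adj : α → α → Prop) [DecidableRel adj]

def greedyStep (D : Finset α) (v : α) : Finset α :=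
  if ∀ u ∈ D, ¬ adj v u then insert v D else D

variable {adj}

lemma subset_foldl_greedyStep (l : List α) (D : Finset α) :
    D ⊆ l.foldl (greedyStep adj) D := by
  induction l generalizing D with
  | nil => exact subset_rfl
  | cons v l ih =>
    refine subset_trans ?_ (ih _)
    unfold greedyStep
    split_ifs
    exacts [subset_insert v D, subset_rfl]

lemma mem_or_mem_of_mem_foldl_greedyStep {l : List α} {D : Finset α} {u : α}
    (h : u ∈ l.foldl (greedyStep adj) D) : u ∈ D ∨ u ∈ l := by
  induction l generalizing D with
  | nil => exact .inl h
  | cons v l ih =>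
    rcases ih h with hD | hl
    · unfold greedyStep at hD
      split_ifs at hD
      · rcases mem_insert.1 hD with rfl | hD
        exacts [.inr List.mem_cons_self, .inl hD]
      · exact .inl hD
    · exact .inr (List.mem_cons_of_mem v hl)

lemma mem_foldl_greedyStep_of_forall_not_adj {l₁ l₂ : List α} {v : α}
    (h : ∀ u ∈ l₁, ¬ adj v u) : v ∈ (l₁ ++ v :: l₂).foldl (greedyStep adj) ∅ := by
  rw [List.foldl_append, List.foldl_cons]
  refine subset_foldl_greedyStep l₂ _ ?_
  have hfree : ∀ u ∈ l₁.foldl (greedyStep adj) ∅, ¬ adj v u := fun u hu =>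
    h u ((mem_or_mem_of_mem_foldl_greedyStep hu).resolve_left (notMem_empty u))
  simp only [greedyStep, if_pos hfree, mem_insert_self]

end Greedy

lemma pathGreedy_eq_foldl_greedyStep (k : ℕ) (σ : Equiv.Perm (Fin k)) :
    pathGreedy k σ = ((List.finRange k).map σ.symm).foldl
      (greedyStep fun v w : Fin k => (v : ℕ) + 1 = w ∨ (w : ℕ) + 1 = v) ∅ := by
  rw [List.foldl_map]
  unfold pathGreedy greedyStep
  congr!

lemma mem_pathGreedy_of_forall_adj_lt {k : ℕ} (σ : Equiv.Perm (Fin k)) (v : Fin k)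
    (h : ∀ w : Fin k, (v : ℕ) + 1 = w ∨ (w : ℕ) + 1 = v → σ v < σ w) :
    v ∈ pathGreedy k σ := by
  rw [pathGreedy_eq_foldl_greedyStep]
  set l := (List.finRange k).map σ.symm
  -- `v` sits at position `σ v` of the processing order `l`
  have hl : l.take (σ v) ++ v :: l.drop (σ v + 1) = l := by
    have hi : (σ v : ℕ) < l.length := by simp [l]
    have hsplit := List.getElem_cons_drop (as := l) hi
    rw [show l[(σ v : ℕ)] = v by simp [l]] at hsplit
    rw [hsplit, List.take_append_drop]
  rw [← hl]
  refine mem_foldl_greedyStep_of_forall_not_adj fun u hu hadj => ?_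
  obtain ⟨i, hi, rfl⟩ := List.mem_iff_getElem.1 hu
  have hlate : (σ v : ℕ) < i := by simpa [l, Fin.lt_def] using h _ hadj
  have hearly : i < σ v := by simpa [l] using hi
  omega

section Permutations

variable {α : Type*} [Fintype α] [LinearOrder α]

lemma card_filter_apply_lt_eq_card_filter_apply_gt (a b : α) :
    #{σ : Equiv.Perm α | σ a < σ b} = #{σ : Equiv.Perm α | σ b < σ a} := by
  refine card_nbij' (· * Equiv.swap a b) (· * Equiv.swap a b) ?_ ?_ ?_ ?_ <;>
    simp [Set.MapsTo, Set.LeftInvOn, Equiv.swap_apply_left, Equiv.swap_apply_right]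

lemma two_mul_card_filter_apply_lt {a b : α} (hab : a ≠ b) :
    2 * #{σ : Equiv.Perm α | σ a < σ b} = (Fintype.card α).factorial := by
  have hcompl : #{σ : Equiv.Perm α | ¬ σ a < σ b} = #{σ : Equiv.Perm α | σ b < σ a} := by
    congr 1
    refine filter_congr fun σ _ => ?_
    rw [not_lt, le_iff_lt_or_eq, or_iff_left (σ.injective.ne hab).symm]
  calc 2 * #{σ : Equiv.Perm α | σ a < σ b}
      _ = #{σ : Equiv.Perm α | σ a < σ b} + #{σ : Equiv.Perm α | ¬ σ a < σ b} := by
        rw [two_mul, hcompl, card_filter_apply_lt_eq_card_filter_apply_gt]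
      _ = (Fintype.card α).factorial := by
        rw [card_filter_add_card_filter_not, card_univ, Fintype.card_perm]

end Permutations

theorem end_vertex_at_least_half (k : ℕ) (hk : 1 ≤ k) :
    (Nat.factorial k : ℝ) / 2 ≤
      ((Finset.univ.filter
          (fun σ : Equiv.Perm (Fin k) => (⟨0, hk⟩ : Fin k) ∈ pathGreedy k σ)).card : ℝ) := by
  set S := Finset.univ.filter fun σ : Equiv.Perm (Fin k) => (⟨0, hk⟩ : Fin k) ∈ pathGreedy k σ
  have key : k.factorial ≤ 2 * #S := by
    obtain rfl | hk2 := eq_or_lt_of_le hk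
    · have hS : S = univ := filter_true_of_mem fun σ _ =>
        mem_pathGreedy_of_forall_adj_lt σ _ fun w hw => by omega
      simp [hS]
    · have hsub : #{σ : Equiv.Perm (Fin k) | σ ⟨0, hk⟩ < σ ⟨1, hk2⟩} ≤ #S :=
        card_le_card <| monotone_filter_right _ fun σ _ hσ =>
          mem_pathGreedy_of_forall_adj_lt σ _ fun w hw => by
            rwa [show w = ⟨1, hk2⟩ from Fin.ext (by simp at hw ⊢; omega)]
      calc k.factorial = 2 * #{σ : Equiv.Perm (Fin k) | σ ⟨0, hk⟩ < σ ⟨1, hk2⟩} := by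
            rw [two_mul_card_filter_apply_lt (by simp [Fin.ext_iff]), Fintype.card_fin]
        _ ≤ 2 * #S := Nat.mul_le_mul_left 2 hsub
  rw [div_le_iff₀ two_pos]
  exact_mod_cast key.trans_eq (mul_comm _ _)
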